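/- arXiv:1909.08283 — 7 statements merged into one kernel-verified Lean document; each statement's English description precedes it below -/
import Mathlib

section
/- Let m ≥ 2. In ℝ^{2m} with the standard inner product ⟨·,·⟩, define the vectors β := 2e_{2m}, and for i = 1, …, m−1, γᵢ := (e_{2i−1} − e_{2i+1}) + (e_{2i} − e_{2i+2}) and γᵢ* := −(e_{2i−1} − e_{2i+1}) + (e_{2i} − e_{2i+2}). Then for any μ = (μ₁, …, μ_{2m}) ∈ ℝ^{2m} with Σ_{i=1}^{m} μ_{2i−1} = 0, the conditions 2⟨θ, μ⟩/⟨θ, θ⟩ ∈ ℕ for every θ ∈ {β} ∪ {γᵢ : 1 ≤ i ≤ m−1} ∪ {γᵢ* : 1 ≤ i ≤ m−1} hold if and only if: for each i = 1, …, m−1 one has μ_{2i} − μ_{2(i+1)} ∈ ℕ, μ_{2i−1} − μ_{2i+1} ∈ ℤ, these two integers have the same parity, and |μ_{2i−1} − μ_{2i+1}| ≤ μ_{2i} − μ_{2(i+1)}; and moreover μ_{2m} ∈ ℕ. -/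
noncomputable section

/-- The `k`-th standard basis vector of `ℝ^n`, with coordinates indexed 1-based and realized as
functions `ℕ → ℝ`. -/
def stdBasis (k : ℕ) : ℕ → ℝ := fun j => if j = k then 1 else 0

/-- The standard inner product of `ℝ^n`, with coordinates indexed by `1, …, n`. -/
def stdInner (n : ℕ) (f g : ℕ → ℝ) : ℝ := ∑ i ∈ Finset.Icc 1 n, f i * g i

/-!
The test vectors are `β = 2e_{2m}` and, writing `x = μ_{2i-1} - μ_{2i+1}`, `y = μ_{2i} - μ_{2i+2}`,
vectors `γᵢ, γᵢ*` of squared length `4` pairing with `μ` to `x + y` and `y - x`. So the conditions say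
`μ_{2m} ∈ ℕ` and `p = (y + x)/2, q = (y - x)/2 ∈ ℕ`; since `y = p + q` and `x = p - q`, the latter
pair of conditions is the same as `y ∈ ℕ`, `x ∈ ℤ` of the parity of `y`, and `|x| ≤ y`.
-/

section StdInner

variable {n : ℕ}

lemma stdInner_add_left (f g h : ℕ → ℝ) :
    stdInner n (f + g) h = stdInner n f h + stdInner n g h := by
  simp only [stdInner, Pi.add_apply, add_mul, Finset.sum_add_distrib]

lemma stdInner_sub_left (f g h : ℕ → ℝ) :
    stdInner n (f - g) h = stdInner n f h - stdInner n g h := by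
  simp only [stdInner, Pi.sub_apply, sub_mul, Finset.sum_sub_distrib]

lemma stdInner_smul_left (c : ℝ) (f h : ℕ → ℝ) :
    stdInner n (c • f) h = c * stdInner n f h := by
  simp only [stdInner, Pi.smul_apply, smul_eq_mul, Finset.mul_sum, mul_assoc]

lemma stdInner_stdBasis_left {k : ℕ} (hk : k ∈ Finset.Icc 1 n) (g : ℕ → ℝ) :
    stdInner n (stdBasis k) g = g k := by
  rw [stdInner, Finset.sum_eq_single_of_mem k hk fun j _ hjk => by simp [stdBasis, hjk]]
  simp [stdBasis]

lemma two_mul_stdInner_smul_stdBasis_div {k : ℕ} (hk : k ∈ Finset.Icc 1 n) {c : ℝ} (hc : c ≠ 0)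
    (g : ℕ → ℝ) :
    2 * stdInner n (c • stdBasis k) g / stdInner n (c • stdBasis k) (c • stdBasis k) =
      2 * g k / c := by
  simp only [stdInner_smul_left, stdInner_stdBasis_left hk, Pi.smul_apply, stdBasis, if_true,
    smul_eq_mul, mul_one]
  field_simp

end StdInner

lemma exists_nat_half_add_and_half_sub_iff (x y : ℝ) :
    ((∃ p : ℕ, (x + y) / 2 = p) ∧ ∃ q : ℕ, (-x + y) / 2 = q) ↔
      ∃ a : ℕ, ∃ b : ℤ, y = a ∧ x = b ∧ (a : ℤ) % 2 = b % 2 ∧ |x| ≤ y := by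
  constructor
  · rintro ⟨⟨p, hp⟩, q, hq⟩
    refine ⟨p + q, (p : ℤ) - q, by push_cast; linarith, by push_cast; linarith, by omega, ?_⟩
    rw [abs_le]
    constructor <;> linarith [(Nat.cast_nonneg p : (0 : ℝ) ≤ p), (Nat.cast_nonneg q : (0 : ℝ) ≤ q)]
  · rintro ⟨a, b, rfl, rfl, hab, hle⟩
    have hle' : |b| ≤ (a : ℤ) := by exact_mod_cast hle
    obtain ⟨hba, hab'⟩ := abs_le.mp hle'
    constructor
    · obtain ⟨p, hp⟩ : ∃ p : ℕ, b + a = 2 * (p : ℤ) := ⟨((b + a) / 2).toNat, by omega⟩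
      have hp' : (b : ℝ) + a = 2 * p := by exact_mod_cast hp
      exact ⟨p, by linarith⟩
    · obtain ⟨q, hq⟩ : ∃ q : ℕ, a - b = 2 * (q : ℤ) := ⟨((a - b) / 2).toNat, by omega⟩
      have hq' : (a : ℝ) - b = 2 * q := by exact_mod_cast hq
      exact ⟨q, by linarith⟩

section Roots

variable {n i : ℕ}

/-- `signedRoot i 1` is `γᵢ` and `signedRoot i (-1)` is `γᵢ*`. -/
def signedRoot (i : ℕ) (s : ℝ) : ℕ → ℝ :=
  s • (stdBasis (2 * i - 1) - stdBasis (2 * i + 1)) + (stdBasis (2 * i) - stdBasis (2 * i + 2))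

lemma stdInner_signedRoot_left (hi : 1 ≤ i) (hn : 2 * i + 2 ≤ n) (s : ℝ) (g : ℕ → ℝ) :
    stdInner n (signedRoot i s) g =
      s * (g (2 * i - 1) - g (2 * i + 1)) + (g (2 * i) - g (2 * i + 2)) := by
  simp only [signedRoot, stdInner_add_left, stdInner_sub_left, stdInner_smul_left]
  repeat rw [stdInner_stdBasis_left (Finset.mem_Icc.mpr ⟨by omega, by omega⟩)]

lemma stdInner_signedRoot_self (hi : 1 ≤ i) (hn : 2 * i + 2 ≤ n) (s : ℝ) :
    stdInner n (signedRoot i s) (signedRoot i s) = 2 * s ^ 2 + 2 := by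
  rw [stdInner_signedRoot_left hi hn]
  simp only [signedRoot, stdBasis, Pi.add_apply, Pi.sub_apply, Pi.smul_apply, smul_eq_mul]
  simp (disch := omega) only [if_neg, if_true]
  ring

lemma two_mul_stdInner_signedRoot_div (hi : 1 ≤ i) (hn : 2 * i + 2 ≤ n) {s : ℝ} (hs : s ^ 2 = 1)
    (g : ℕ → ℝ) :
    2 * stdInner n (signedRoot i s) g / stdInner n (signedRoot i s) (signedRoot i s) =
      (s * (g (2 * i - 1) - g (2 * i + 1)) + (g (2 * i) - g (2 * i + 2))) / 2 := by
  rw [stdInner_signedRoot_left hi hn, stdInner_signedRoot_self hi hn, hs]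
  ring

lemma signedRoot_one (i : ℕ) :
    signedRoot i 1 =
      (stdBasis (2 * i - 1) - stdBasis (2 * i + 1)) + (stdBasis (2 * i) - stdBasis (2 * i + 2)) := by
  rw [signedRoot, one_smul]

lemma signedRoot_neg_one (i : ℕ) :
    signedRoot i (-1) =
      -(stdBasis (2 * i - 1) - stdBasis (2 * i + 1)) + (stdBasis (2 * i) - stdBasis (2 * i + 2)) := by
  rw [signedRoot, neg_one_smul]

lemma exists_nat_signedRoot_one_and_neg_one_iff (hi : 1 ≤ i) (hn : 2 * i + 2 ≤ n)
    (g : ℕ → ℝ) :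
    ((∃ p : ℕ,
        2 * stdInner n (signedRoot i 1) g / stdInner n (signedRoot i 1) (signedRoot i 1) = p) ∧
      ∃ q : ℕ,
        2 * stdInner n (signedRoot i (-1)) g / stdInner n (signedRoot i (-1)) (signedRoot i (-1)) =
          q) ↔
      ∃ a : ℕ, ∃ b : ℤ, g (2 * i) - g (2 * i + 2) = a ∧ g (2 * i - 1) - g (2 * i + 1) = b ∧
        (a : ℤ) % 2 = b % 2 ∧ |g (2 * i - 1) - g (2 * i + 1)| ≤ g (2 * i) - g (2 * i + 2) := by
  rw [two_mul_stdInner_signedRoot_div hi hn (one_pow 2), one_mul,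
    two_mul_stdInner_signedRoot_div hi hn (by norm_num), neg_one_mul]
  exact exists_nat_half_add_and_half_sub_iff _ _

end Roots

theorem stmt_1_general (m : ℕ) (hm : 2 ≤ m) (μ : ℕ → ℝ) :
    (∀ θ ∈ (({(2 : ℝ) • stdBasis (2 * m)} ∪
        {v | ∃ i, 1 ≤ i ∧ i ≤ m - 1 ∧
          v = (stdBasis (2 * i - 1) - stdBasis (2 * i + 1)) +
              (stdBasis (2 * i) - stdBasis (2 * i + 2))} ∪
        {v | ∃ i, 1 ≤ i ∧ i ≤ m - 1 ∧
          v = -(stdBasis (2 * i - 1) - stdBasis (2 * i + 1)) +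
              (stdBasis (2 * i) - stdBasis (2 * i + 2))}) : Set (ℕ → ℝ)),
      ∃ n : ℕ, 2 * stdInner (2 * m) θ μ / stdInner (2 * m) θ θ = n) ↔
    ((∀ i, 1 ≤ i → i ≤ m - 1 →
        ∃ a : ℕ, ∃ b : ℤ,
          μ (2 * i) - μ (2 * (i + 1)) = (a : ℝ) ∧
          μ (2 * i - 1) - μ (2 * i + 1) = (b : ℝ) ∧
          (a : ℤ) % 2 = b % 2 ∧
          |μ (2 * i - 1) - μ (2 * i + 1)| ≤ μ (2 * i) - μ (2 * (i + 1))) ∧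
      ∃ n : ℕ, μ (2 * m) = n) := by
  have h2m : 2 * m ∈ Finset.Icc 1 (2 * m) := Finset.mem_Icc.mpr ⟨by omega, le_rfl⟩
  simp only [← signedRoot_one, ← signedRoot_neg_one, Set.mem_union, Set.mem_singleton_iff,
    Set.mem_ofPred_eq, or_imp, forall_and, forall_eq, forall_exists_index, and_imp, mul_add_one,
    two_mul_stdInner_smul_stdBasis_div h2m two_ne_zero, mul_div_cancel_left₀ _ (two_ne_zero' ℝ)]
  constructor
  · rintro ⟨⟨hβ, hγ⟩, hγ'⟩
    refine ⟨fun i hi hi' => ?_, hβ⟩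
    exact (exists_nat_signedRoot_one_and_neg_one_iff hi (by omega) μ).1
      ⟨hγ _ i hi hi' rfl, hγ' _ i hi hi' rfl⟩
  · rintro ⟨h, hβ⟩
    refine ⟨⟨hβ, ?_⟩, ?_⟩ <;> rintro _ i hi hi' rfl
    exacts [((exists_nat_signedRoot_one_and_neg_one_iff hi (by omega) μ).2 (h i hi hi')).1,
      ((exists_nat_signedRoot_one_and_neg_one_iff hi (by omega) μ).2 (h i hi hi')).2]

/-- In `ℝ^{2m}`, with `β := 2e_{2m}`, `γᵢ := (e_{2i−1} − e_{2i+1}) + (e_{2i} −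
e_{2i+2})` and `γᵢ* := −(e_{2i−1} − e_{2i+1}) + (e_{2i} − e_{2i+2})` for `i = 1, …, m−1`, a vector
`μ` with `Σ_{i=1}^m μ_{2i−1} = 0` satisfies `2⟨θ, μ⟩/⟨θ, θ⟩ ∈ ℕ` for all these `θ` if and only if
for each `i = 1, …, m−1`: `μ_{2i} − μ_{2(i+1)} ∈ ℕ`, `μ_{2i−1} − μ_{2i+1} ∈ ℤ`, these two have the
same parity and `|μ_{2i−1} − μ_{2i+1}| ≤ μ_{2i} − μ_{2(i+1)}`; and moreover `μ_{2m} ∈ ℕ`. -/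
theorem stmt_1 (m : ℕ) (hm : 2 ≤ m) (μ : ℕ → ℝ)
    (hμ : ∑ i ∈ Finset.Icc 1 m, μ (2 * i - 1) = 0) :
    (∀ θ ∈ (({(2 : ℝ) • stdBasis (2 * m)} ∪
        {v | ∃ i, 1 ≤ i ∧ i ≤ m - 1 ∧
          v = (stdBasis (2 * i - 1) - stdBasis (2 * i + 1)) +
              (stdBasis (2 * i) - stdBasis (2 * i + 2))} ∪
        {v | ∃ i, 1 ≤ i ∧ i ≤ m - 1 ∧
          v = -(stdBasis (2 * i - 1) - stdBasis (2 * i + 1)) +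
              (stdBasis (2 * i) - stdBasis (2 * i + 2))}) : Set (ℕ → ℝ)),
      ∃ n : ℕ, 2 * stdInner (2 * m) θ μ / stdInner (2 * m) θ θ = n) ↔
    ((∀ i, 1 ≤ i → i ≤ m - 1 →
        ∃ a : ℕ, ∃ b : ℤ,
          μ (2 * i) - μ (2 * (i + 1)) = (a : ℝ) ∧
          μ (2 * i - 1) - μ (2 * i + 1) = (b : ℝ) ∧
          (a : ℤ) % 2 = b % 2 ∧
          |μ (2 * i - 1) - μ (2 * i + 1)| ≤ μ (2 * i) - μ (2 * (i + 1))) ∧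
      ∃ n : ℕ, μ (2 * m) = n) :=
  stmt_1_general m hm μ
end
end

section
/- Let m ≥ 2. For each tuple k = (k₁, …, k_{m−1}) of odd integers, let μ(k) ∈ ℝ^{m} be the unique vector with Σ_{i=1}^{m} μᵢ = 0 and μᵢ − μ_{i+1} = kᵢ for i = 1, …, m−1, and set F(k) := Σ_{i=1}^{m} μᵢ(k)². Then F attains its minimum over all tuples of odd integers exactly at the two alternating tuples k = (1, −1, 1, −1, …) (i.e. kᵢ = (−1)^{i+1}) and k = (−1, 1, −1, 1, …) (i.e. kᵢ = (−1)^{i}); that is, F(k) ≥ F((1,−1,1,…)) for every tuple k of odd integers, with equality if and only if k is one of these two tuples. -/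
/-!
Since `∑ μᵢ = 0`, the sum `∑ᵢ∑ⱼ (μᵢ - μⱼ)²` equals `2m ∑ μᵢ²`. When `i` and `j` have different
parity, `μᵢ - μⱼ` is a sum of an odd number of odd integers, hence `(μᵢ - μⱼ)² ≥ 1`; this gives
the termwise lower bound `(μᵢ - μⱼ)² ≥ [i ≢ j mod 2]`. For the alternating tuples every term
attains this bound, and conversely attaining it for all pairs forces `μₜ = μₜ₊₂` and `k₁ = ±1`.
-/

open Finset

theorem sum_sum_sub_sq {ι R : Type*} [CommRing R] (s : Finset ι) (f : ι → R) :
    ∑ i ∈ s, ∑ j ∈ s, (f i - f j) ^ 2 = 2 * #s * ∑ i ∈ s, f i ^ 2 - 2 * (∑ i ∈ s, f i) ^ 2 := by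
  simp only [sub_sq, sum_add_distrib, sum_sub_distrib, sum_const, nsmul_eq_mul, ← mul_sum,
    ← sum_mul]
  ring

theorem sum_sq_eq_sum_sum_sub_sq_div {ι R : Type*} [Field R] [CharZero R] {s : Finset ι}
    {f : ι → R} (hf : ∑ i ∈ s, f i = 0) :
    ∑ i ∈ s, f i ^ 2 = (∑ i ∈ s, ∑ j ∈ s, (f i - f j) ^ 2) / (2 * #s) := by
  rcases s.eq_empty_or_nonempty with rfl | hs
  · simp
  have hcard : (#s : R) ≠ 0 := Nat.cast_ne_zero.mpr hs.card_pos.ne'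
  rw [sum_sum_sub_sq, hf]
  field_simp
  ring

theorem Int.odd_sum_iff_odd_card {ι : Type*} {s : Finset ι} {f : ι → ℤ}
    (hf : ∀ i ∈ s, Odd (f i)) : Odd (∑ i ∈ s, f i) ↔ Odd #s := by
  classical
  induction s using Finset.induction_on with
  | empty => simp
  | insert a s ha ih =>
    rw [sum_insert ha, card_insert_of_notMem ha, Int.odd_add, Nat.odd_add_one,
      ← ih fun i hi ↦ hf i (mem_insert_of_mem hi), ← Int.not_odd_iff_even]
    simp [hf a (mem_insert_self a s)]

theorem sub_eq_sum_Ico_of_sub_succ {M : Type*} [AddCommGroup M] {f d : ℕ → M} {a b : ℕ}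
    (hab : a ≤ b) (h : ∀ t ∈ Ico a b, f t - f (t + 1) = d t) :
    f a - f b = ∑ t ∈ Ico a b, d t := by
  rw [← sum_congr rfl h, ← neg_sub, ← sum_Ico_sub f hab, ← sum_neg_distrib]
  simp

def parityGap (i j : ℕ) : ℝ := if Even (i + j) then 0 else 1

theorem parityGap_comm (i j : ℕ) : parityGap i j = parityGap j i := by
  rw [parityGap, parityGap, add_comm]

theorem parityGap_eq (i j : ℕ) : parityGap i j = (1 - (-1) ^ (i + j)) / 2 := by
  unfold parityGap
  split_ifs with h
  · simp [h.neg_one_pow]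
  · simp [(Nat.not_even_iff_odd.mp h).neg_one_pow]

theorem Int.one_le_sq_of_odd {z : ℤ} (hz : Odd z) : 1 ≤ z ^ 2 := by
  rw [one_le_sq_iff_one_le_abs]
  exact Int.one_le_abs (by rintro rfl; simp at hz)

section OddSteps

variable {m : ℕ} {k : ℕ → ℤ} {μ : ℕ → ℝ}

theorem sub_eq_cast_sum_Ico (hdiff : ∀ i, 1 ≤ i → i ≤ m - 1 → μ i - μ (i + 1) = k i)
    {i j : ℕ} (hi : 1 ≤ i) (hij : i ≤ j) (hj : j ≤ m) :
    μ i - μ j = ((∑ t ∈ Ico i j, k t : ℤ) : ℝ) := by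
  push_cast
  exact sub_eq_sum_Ico_of_sub_succ hij fun t ht ↦ by
    rw [mem_Ico] at ht
    exact hdiff t (by omega) (by omega)

theorem parityGap_le_sq_sub (hodd : ∀ i, 1 ≤ i → i ≤ m - 1 → Odd (k i))
    (hdiff : ∀ i, 1 ≤ i → i ≤ m - 1 → μ i - μ (i + 1) = k i) {i j : ℕ}
    (hi : i ∈ Icc 1 m) (hj : j ∈ Icc 1 m) : parityGap i j ≤ (μ i - μ j) ^ 2 := by
  wlog hij : i ≤ j generalizing i j
  · rw [parityGap_comm, ← neg_sub, neg_sq]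
    exact this hj hi (le_of_not_ge hij)
  rw [mem_Icc] at hi hj
  unfold parityGap
  split_ifs with hpar
  · positivity
  have hsum : Odd (∑ t ∈ Ico i j, k t) := by
    rw [Int.odd_sum_iff_odd_card fun t ht ↦ ?_, Nat.card_Ico, Nat.odd_iff]
    · rw [Nat.even_iff] at hpar
      omega
    · rw [mem_Ico] at ht
      exact hodd t (by omega) (by omega)
  rw [sub_eq_cast_sum_Ico hdiff hi.1 hij hj.2]
  exact_mod_cast Int.one_le_sq_of_odd hsum

end OddSteps

theorem sq_sub_eq_parityGap_of_alternating {m : ℕ} {f : ℕ → ℝ} {ε : ℝ} (hε : ε ^ 2 = 1)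
    (hdiff : ∀ i, 1 ≤ i → i ≤ m - 1 → f i - f (i + 1) = ε * (-1) ^ (i + 1)) {i j : ℕ}
    (hi : i ∈ Icc 1 m) (hj : j ∈ Icc 1 m) : (f i - f j) ^ 2 = parityGap i j := by
  wlog hij : i ≤ j generalizing i j
  · rw [parityGap_comm, ← neg_sub, neg_sq]
    exact this hj hi (le_of_not_ge hij)
  rw [mem_Icc] at hi hj
  -- `g` is an explicit solution of the same difference equation
  set g : ℕ → ℝ := fun t ↦ ε * (-1) ^ (t + 1) / 2
  have hfg : f i - f j = g i - g j := by
    rw [sub_eq_sum_Ico_of_sub_succ hij fun t ht ↦ ?_,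
      sub_eq_sum_Ico_of_sub_succ hij fun t _ ↦ (?_ : g t - g (t + 1) = ε * (-1) ^ (t + 1))]
    · simp only [g]; ring
    · rw [mem_Ico] at ht
      exact hdiff t (by omega) (by omega)
  have ha : ((-1 : ℝ) ^ i) ^ 2 = 1 := by rw [← pow_mul, mul_comm, pow_mul]; simp
  have hb : ((-1 : ℝ) ^ j) ^ 2 = 1 := by rw [← pow_mul, mul_comm, pow_mul]; simp
  rw [hfg, parityGap_eq, pow_add]
  simp only [g]
  linear_combination
    (((-1 : ℝ) ^ i - (-1) ^ j) ^ 2 / 4) * hε + (1 / 4 : ℝ) * ha + (1 / 4 : ℝ) * hb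

theorem eq_neg_one_pow_mul_of_succ_eq_neg {n : ℕ} {k : ℕ → ℤ}
    (h : ∀ t, 1 ≤ t → t + 1 ≤ n → k (t + 1) = -k t) :
    ∀ t, 1 ≤ t → t ≤ n → k t = (-1) ^ (t + 1) * k 1 := by
  intro t ht
  induction t, ht using Nat.le_induction with
  | base => simp
  | succ t ht ih =>
    intro htn
    rw [h t ht htn, ih (by omega)]
    ring

theorem sq_sub_eq_parityGap_iff {m : ℕ} (hm : 2 ≤ m) {k : ℕ → ℤ} {μ : ℕ → ℝ}
    (hdiff : ∀ i, 1 ≤ i → i ≤ m - 1 → μ i - μ (i + 1) = k i) :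
    (∀ i ∈ Icc 1 m, ∀ j ∈ Icc 1 m, (μ i - μ j) ^ 2 = parityGap i j) ↔
      (∀ i, 1 ≤ i → i ≤ m - 1 → k i = (-1) ^ (i + 1)) ∨
      (∀ i, 1 ≤ i → i ≤ m - 1 → k i = (-1) ^ i) := by
  constructor
  · intro h
    have hstep : ∀ t, 1 ≤ t → t + 1 ≤ m - 1 → k (t + 1) = -k t := by
      intro t ht htm
      have h2 := h t (mem_Icc.mpr ⟨by omega, by omega⟩) (t + 2) (mem_Icc.mpr ⟨by omega, by omega⟩)
      rw [parityGap, if_pos (by rw [Nat.even_add]; simp [parity_simps]), sq_eq_zero_iff,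
        show μ t - μ (t + 2) = (μ t - μ (t + 1)) + (μ (t + 1) - μ (t + 1 + 1)) by ring,
        hdiff t ht (by omega), hdiff (t + 1) (by omega) htm] at h2
      exact_mod_cast eq_neg_of_add_eq_zero_right h2
    have hfirst : k 1 = 1 ∨ k 1 = -1 := by
      have h12 := h 1 (mem_Icc.mpr ⟨by omega, by omega⟩) 2 (mem_Icc.mpr ⟨by omega, by omega⟩)
      rw [hdiff 1 le_rfl (by omega), parityGap, if_neg (by decide)] at h12
      exact sq_eq_one_iff.mp (by exact_mod_cast h12)
    have halt := eq_neg_one_pow_mul_of_succ_eq_neg hstep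
    rcases hfirst with h1 | h1
    · left
      intro i hi him
      rw [halt i hi him, h1, mul_one]
    · right
      intro i hi him
      rw [halt i hi him, h1, pow_succ]
      ring
  · rintro (halt | halt) i hi j hj
    · refine sq_sub_eq_parityGap_of_alternating (ε := 1) (by norm_num) (fun t ht htm ↦ ?_) hi hj
      rw [hdiff t ht htm, halt t ht htm]
      push_cast
      ring
    · refine sq_sub_eq_parityGap_of_alternating (ε := -1) (by norm_num) (fun t ht htm ↦ ?_) hi hj
      rw [hdiff t ht htm, halt t ht htm]
      push_cast
      ring

/-- Let `m ≥ 2`. For a tuple `k = (k₁, …, k_{m−1})` of odd integers let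
`μ ∈ ℝ^m` be the unique vector with `Σ_{i=1}^m μᵢ = 0` and `μᵢ − μ_{i+1} = kᵢ`, and let
`ν ∈ ℝ^m` be the corresponding vector for the alternating tuple `(1, −1, 1, −1, …)`. Then
`Σ νᵢ² ≤ Σ μᵢ²`, with equality if and only if `k` is one of the two alternating tuples
`kᵢ = (−1)^{i+1}` or `kᵢ = (−1)^i`. -/
theorem stmt_4 (m : ℕ) (hm : 2 ≤ m)
    (k : ℕ → ℤ) (hodd : ∀ i, 1 ≤ i → i ≤ m - 1 → Odd (k i))
    (μ ν : ℕ → ℝ)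
    (hμsum : ∑ i ∈ Finset.Icc 1 m, μ i = 0)
    (hμdiff : ∀ i, 1 ≤ i → i ≤ m - 1 → μ i - μ (i + 1) = (k i : ℝ))
    (hνsum : ∑ i ∈ Finset.Icc 1 m, ν i = 0)
    (hνdiff : ∀ i, 1 ≤ i → i ≤ m - 1 → ν i - ν (i + 1) = (-1 : ℝ) ^ (i + 1)) :
    (∑ i ∈ Finset.Icc 1 m, ν i ^ 2) ≤ (∑ i ∈ Finset.Icc 1 m, μ i ^ 2) ∧
    ((∑ i ∈ Finset.Icc 1 m, μ i ^ 2) = (∑ i ∈ Finset.Icc 1 m, ν i ^ 2) ↔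
      (∀ i, 1 ≤ i → i ≤ m - 1 → k i = (-1) ^ (i + 1)) ∨
      (∀ i, 1 ≤ i → i ≤ m - 1 → k i = (-1) ^ i)) := by
  have hν : ∀ i ∈ Icc 1 m, ∀ j ∈ Icc 1 m, (ν i - ν j) ^ 2 = parityGap i j :=
    fun i hi j hj ↦ sq_sub_eq_parityGap_of_alternating (ε := 1) (by norm_num)
      (fun t ht htm ↦ by rw [hνdiff t ht htm, one_mul]) hi hj
  have hμ : ∀ i ∈ Icc 1 m, ∀ j ∈ Icc 1 m, parityGap i j ≤ (μ i - μ j) ^ 2 :=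
    fun i hi j hj ↦ parityGap_le_sq_sub hodd hμdiff hi hj
  have hpos : (0 : ℝ) < 2 * #(Icc 1 m) := by rw [Nat.card_Icc]; positivity
  rw [sum_sq_eq_sum_sum_sub_sq_div hμsum, sum_sq_eq_sum_sum_sub_sq_div hνsum,
    sum_congr rfl fun i hi ↦ sum_congr rfl (hν i hi), div_le_div_iff_of_pos_right hpos,
    div_left_inj' hpos.ne', eq_comm, ← sq_sub_eq_parityGap_iff hm hμdiff]
  refine ⟨sum_le_sum fun i hi ↦ sum_le_sum (hμ i hi), ?_⟩
  rw [sum_eq_sum_iff_of_le fun i hi ↦ sum_le_sum (hμ i hi)]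
  refine forall₂_congr fun i hi ↦ ?_
  rw [sum_eq_sum_iff_of_le (hμ i hi)]
  exact forall₂_congr fun j _ ↦ eq_comm
end

section
/- Let m ≥ 2. For each tuple k = (k₁, …, k_{m−1}) of integers, let μ(k) ∈ ℝ^{m} be the unique vector with Σ_{i=1}^{m} μᵢ = m(m−1)/4 and μᵢ − μ_{i+1} = kᵢ for i = 1, …, m−1, and set G(k) := Σ_{i=1}^{m} (μᵢ(k)² + i·μᵢ(k)). Then G attains its minimum over all integer tuples exactly at the two alternating tuples k = (1, 0, 1, 0, …) (i.e. kᵢ = 1 for i odd, kᵢ = 0 for i even) and k = (0, 1, 0, 1, …) (i.e. kᵢ = 0 for i odd, kᵢ = 1 for i even); that is, G(k) ≥ G((1,0,1,…)) for every integer tuple k, with equality if and only if k is one of these two tuples. -/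
/-! With `yᵢ = 2μᵢ + i` one has `4 G = Σ yᵢ² − Σ i²`, and `Σ yᵢ = m²` is fixed, so `G` is an
increasing affine function of the spread `Σᵢⱼ (yᵢ − yⱼ)²`. The steps `yᵢ − yᵢ₊₁ = 2kᵢ − 1` are odd
integers, so every gap `yᵢ − yⱼ` is an integer of the parity of `i + j`, and `(yᵢ − yⱼ)²` is at
least `1` or `0` accordingly. Both alternating tuples give walks meeting all these bounds, and
conversely a walk meeting them has all steps `±1` (so `kᵢ ∈ {0, 1}`) and all double steps `0`
(so `kᵢ + kᵢ₊₁ = 1`), which forces `k` to alternate. -/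

open Finset

section Spread

variable {ι R : Type*} [CommRing R]

def spread (s : Finset ι) (x : ι → R) : R := ∑ i ∈ s, ∑ j ∈ s, (x i - x j) ^ 2

theorem spread_eq_card_mul_sum_sq (s : Finset ι) (x : ι → R) :
    spread s x = 2 * #s * ∑ i ∈ s, x i ^ 2 - 2 * (∑ i ∈ s, x i) ^ 2 := by
  simp only [spread, sub_sq, sum_add_distrib, sum_sub_distrib, sum_const, nsmul_eq_mul,
    ← mul_sum, ← sum_mul]
  ring

theorem spread_eq_sum_product (s : Finset ι) (x : ι → R) :
    spread s x = ∑ p ∈ s ×ˢ s, (x p.1 - x p.2) ^ 2 :=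
  (sum_product s s fun p => (x p.1 - x p.2) ^ 2).symm

variable [PartialOrder R] [IsOrderedCancelAddMonoid R] {s : Finset ι} {x y : ι → R}

theorem spread_le_spread (h : ∀ i ∈ s, ∀ j ∈ s, (x i - x j) ^ 2 ≤ (y i - y j) ^ 2) :
    spread s x ≤ spread s y := by
  rw [spread_eq_sum_product, spread_eq_sum_product]
  exact sum_le_sum fun p hp => h p.1 (mem_product.mp hp).1 p.2 (mem_product.mp hp).2

theorem spread_eq_spread_iff (h : ∀ i ∈ s, ∀ j ∈ s, (x i - x j) ^ 2 ≤ (y i - y j) ^ 2) :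
    spread s x = spread s y ↔ ∀ i ∈ s, ∀ j ∈ s, (x i - x j) ^ 2 = (y i - y j) ^ 2 := by
  rw [spread_eq_sum_product, spread_eq_sum_product,
    sum_eq_sum_iff_of_le fun p hp => h p.1 (mem_product.mp hp).1 p.2 (mem_product.mp hp).2]
  exact ⟨fun H i hi j hj => H (i, j) (mem_product.mpr ⟨hi, hj⟩),
    fun H p hp => H p.1 (mem_product.mp hp).1 p.2 (mem_product.mp hp).2⟩

end Spread

def energy (s : Finset ℕ) (μ : ℕ → ℝ) : ℝ := ∑ i ∈ s, (μ i ^ 2 + (i : ℝ) * μ i)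

theorem card_mul_energy_sub_energy (s : Finset ℕ) {μ ν : ℕ → ℝ}
    (h : ∑ i ∈ s, μ i = ∑ i ∈ s, ν i) :
    8 * #s * (energy s μ - energy s ν) =
      spread s (fun i => 2 * μ i + i) - spread s (fun i => 2 * ν i + i) := by
  have key (μ : ℕ → ℝ) : 8 * #s * energy s μ = spread s (fun i => 2 * μ i + i)
      + 2 * (∑ i ∈ s, (2 * μ i + i)) ^ 2 - 2 * #s * ∑ i ∈ s, (i : ℝ) ^ 2 := by
    have hsq : ∑ i ∈ s, (2 * μ i + i) ^ 2 = 4 * energy s μ + ∑ i ∈ s, (i : ℝ) ^ 2 := by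
      rw [energy, mul_sum, ← sum_add_distrib]
      exact sum_congr rfl fun i _ => by ring
    rw [spread_eq_card_mul_sum_sq, hsq]
    ring
  have hsum : ∑ i ∈ s, (2 * μ i + i) = ∑ i ∈ s, (2 * ν i + i) := by
    simp only [sum_add_distrib, ← mul_sum, h]
  rw [mul_sub, key, key, hsum]
  ring

noncomputable def oddInd (i : ℕ) : ℝ := if Odd i then 1 else 0

theorem oddInd_add_one (i : ℕ) : oddInd (i + 1) = 1 - oddInd i := by
  by_cases h : Odd i <;> simp [oddInd, h, Nat.odd_add_one]

theorem oddInd_sub_sq (i j : ℕ) : (oddInd i - oddInd j) ^ 2 = if Odd (i + j) then 1 else 0 := by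
  by_cases hi : Odd i <;> by_cases hj : Odd j <;> simp [oddInd, hi, hj, Nat.odd_add]

theorem oddInd_sub_sq_le_sq {i j : ℕ} {n : ℤ} (h : Odd n ↔ Odd (i + j)) :
    (oddInd i - oddInd j) ^ 2 ≤ (n : ℝ) ^ 2 := by
  rw [oddInd_sub_sq]
  split_ifs with hij
  · have hn : n ≠ 0 := by rintro rfl; exact Int.not_odd_zero (h.mpr hij)
    exact_mod_cast (one_le_sq_iff_one_le_abs _).mpr (Int.one_le_abs hn)
  · positivity

theorem sub_eq_sub_of_forall_sub_succ_eq {m : ℕ} {y z : ℕ → ℝ}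
    (h : ∀ i, 1 ≤ i → i ≤ m - 1 → y i - y (i + 1) = z i - z (i + 1)) :
    ∀ i, 1 ≤ i → i ≤ m → y i - z i = y 1 - z 1 := by
  intro i hi
  induction i, hi using Nat.le_induction with
  | base => exact fun _ => rfl
  | succ n hn ih =>
    intro hnm
    linarith [h n hn (by omega), ih (by omega)]

section OddStepWalk

variable {m : ℕ} {y : ℕ → ℝ} {k : ℕ → ℤ}

theorem exists_int_sub_odd_iff (hy : ∀ i, 1 ≤ i → i ≤ m - 1 → y i - y (i + 1) = 2 * k i - 1)
    {i j : ℕ} (hi : 1 ≤ i) (hij : i ≤ j) (hj : j ≤ m) :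
    ∃ n : ℤ, y i - y j = n ∧ (Odd n ↔ Odd (i + j)) := by
  induction j, hij using Nat.le_induction with
  | base => exact ⟨0, by simp, by simp⟩
  | succ j hij ih =>
    obtain ⟨n, hn, hpar⟩ := ih (by omega)
    refine ⟨n + 2 * k j - 1, ?_, ?_⟩
    · push_cast
      linarith [hy j (by omega) (by omega)]
    · rw [Int.odd_iff, Nat.odd_iff] at *
      omega

theorem oddInd_sub_sq_le_sq_sub
    (hy : ∀ i, 1 ≤ i → i ≤ m - 1 → y i - y (i + 1) = 2 * k i - 1)
    {i j : ℕ} (hi : i ∈ Icc 1 m) (hj : j ∈ Icc 1 m) :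
    (oddInd i - oddInd j) ^ 2 ≤ (y i - y j) ^ 2 := by
  rw [mem_Icc] at hi hj
  rcases le_total i j with hij | hji
  · obtain ⟨n, hn, hpar⟩ := exists_int_sub_odd_iff hy hi.1 hij hj.2
    exact hn ▸ oddInd_sub_sq_le_sq hpar
  · obtain ⟨n, hn, hpar⟩ := exists_int_sub_odd_iff hy hj.1 hji hi.2
    rw [sub_sq_comm, sub_sq_comm (y i), hn]
    exact oddInd_sub_sq_le_sq hpar

theorem sq_sub_eq_of_alternating
    (hy : ∀ i, 1 ≤ i → i ≤ m - 1 → y i - y (i + 1) = 2 * k i - 1)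
    (hk : (∀ i, 1 ≤ i → i ≤ m - 1 → k i = if Odd i then 1 else 0) ∨
      (∀ i, 1 ≤ i → i ≤ m - 1 → k i = if Odd i then 0 else 1)) :
    ∀ i ∈ Icc 1 m, ∀ j ∈ Icc 1 m, (y i - y j) ^ 2 = (oddInd i - oddInd j) ^ 2 := by
  obtain ⟨σ, hσ, hz⟩ : ∃ σ : ℝ, σ ^ 2 = 1 ∧ ∀ i, 1 ≤ i → i ≤ m - 1 →
      y i - y (i + 1) = σ * oddInd i - σ * oddInd (i + 1) := by
    rcases hk with hk | hk
    · refine ⟨1, one_pow 2, fun i h1 h2 => ?_⟩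
      rw [hy i h1 h2, hk i h1 h2, oddInd_add_one]
      by_cases h : Odd i <;> norm_num [oddInd, h]
    · refine ⟨-1, by norm_num, fun i h1 h2 => ?_⟩
      rw [hy i h1 h2, hk i h1 h2, oddInd_add_one]
      by_cases h : Odd i <;> norm_num [oddInd, h]
  intro i hi j hj
  rw [mem_Icc] at hi hj
  have hyi := sub_eq_sub_of_forall_sub_succ_eq hz i hi.1 hi.2
  have hyj := sub_eq_sub_of_forall_sub_succ_eq hz j hj.1 hj.2
  linear_combination (y i - y j + σ * (oddInd i - oddInd j)) * (hyi - hyj) +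
    (oddInd i - oddInd j) ^ 2 * hσ

theorem alternating_of_sq_sub_eq (hm : 2 ≤ m)
    (hy : ∀ i, 1 ≤ i → i ≤ m - 1 → y i - y (i + 1) = 2 * k i - 1)
    (h : ∀ i ∈ Icc 1 m, ∀ j ∈ Icc 1 m, (y i - y j) ^ 2 = (oddInd i - oddInd j) ^ 2) :
    (∀ i, 1 ≤ i → i ≤ m - 1 → k i = if Odd i then 1 else 0) ∨
      (∀ i, 1 ≤ i → i ≤ m - 1 → k i = if Odd i then 0 else 1) := by
  have hk01 (i : ℕ) (h1 : 1 ≤ i) (h2 : i ≤ m - 1) : k i = 0 ∨ k i = 1 := by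
    have hsq := h i (by simp; omega) (i + 1) (by simp; omega)
    rw [hy i h1 h2, oddInd_sub_sq, if_pos ⟨i, by ring⟩] at hsq
    have : (k i : ℝ) * (k i - 1) = 0 := by linear_combination hsq / 4
    rcases mul_eq_zero.mp (by exact_mod_cast this : k i * (k i - 1) = 0) with hk0 | hk1
    · exact Or.inl hk0
    · exact Or.inr (by omega)
  have hpair (i : ℕ) (h1 : 1 ≤ i) (h2 : i + 2 ≤ m) : k i + k (i + 1) = 1 := by
    have hsq := h i (by simp; omega) (i + 2) (by simp; omega)
    rw [oddInd_sub_sq, if_neg (Nat.not_odd_iff_even.mpr ⟨i + 1, by ring⟩)] at hsq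
    have : y i - y (i + 2) = 2 * k i + 2 * k (i + 1) - 2 := by
      linarith [hy i h1 (by omega), hy (i + 1) (by omega) (by omega)]
    have : (k i : ℝ) + k (i + 1) = 1 := by nlinarith
    exact_mod_cast this
  have hk_eq (i : ℕ) (h1 : 1 ≤ i) : i ≤ m - 1 → k i = if Odd i then k 1 else 1 - k 1 := by
    induction i, h1 using Nat.le_induction with
    | base => simp
    | succ n hn ih =>
      intro hnm
      have := hpair n hn (by omega)
      by_cases hodd : Odd n
      · rw [if_pos hodd] at ih
        rw [if_neg (Nat.not_odd_iff_even.mpr hodd.add_one)]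
        linarith [ih (by omega)]
      · rw [if_neg hodd] at ih
        rw [if_pos ((Nat.not_odd_iff_even.mp hodd).add_one)]
        linarith [ih (by omega)]
  rcases hk01 1 le_rfl (by omega) with hk1 | hk1
  · exact Or.inr fun i h1 h2 => by rw [hk_eq i h1 h2, hk1]; split_ifs <;> rfl
  · exact Or.inl fun i h1 h2 => by rw [hk_eq i h1 h2, hk1]; split_ifs <;> rfl

end OddStepWalk

/-- Let `m ≥ 2`. For a tuple `k = (k₁, …, k_{m−1})` of integers let `μ ∈ ℝ^m`
be the unique vector with `Σ_{i=1}^m μᵢ = m(m−1)/4` and `μᵢ − μ_{i+1} = kᵢ`, and set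
`G(k) := Σ_{i=1}^m (μᵢ² + i·μᵢ)`; let `ν` be the corresponding vector for the alternating tuple
`(1, 0, 1, 0, …)`. Then `G(ν-tuple) ≤ G(k)`, with equality if and only if `k` is one of the two
alternating tuples `(1, 0, 1, 0, …)` or `(0, 1, 0, 1, …)`. -/
theorem stmt_6 (m : ℕ) (hm : 2 ≤ m)
    (k : ℕ → ℤ)
    (μ ν : ℕ → ℝ)
    (hμsum : ∑ i ∈ Finset.Icc 1 m, μ i = (m : ℝ) * ((m : ℝ) - 1) / 4)
    (hμdiff : ∀ i, 1 ≤ i → i ≤ m - 1 → μ i - μ (i + 1) = (k i : ℝ))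
    (hνsum : ∑ i ∈ Finset.Icc 1 m, ν i = (m : ℝ) * ((m : ℝ) - 1) / 4)
    (hνdiff : ∀ i, 1 ≤ i → i ≤ m - 1 → ν i - ν (i + 1) = if Odd i then 1 else 0) :
    (∑ i ∈ Finset.Icc 1 m, (ν i ^ 2 + (i : ℝ) * ν i)) ≤
      (∑ i ∈ Finset.Icc 1 m, (μ i ^ 2 + (i : ℝ) * μ i)) ∧
    ((∑ i ∈ Finset.Icc 1 m, (μ i ^ 2 + (i : ℝ) * μ i)) =
        (∑ i ∈ Finset.Icc 1 m, (ν i ^ 2 + (i : ℝ) * ν i)) ↔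
      (∀ i, 1 ≤ i → i ≤ m - 1 → k i = if Odd i then 1 else 0) ∨
      (∀ i, 1 ≤ i → i ≤ m - 1 → k i = if Odd i then 0 else 1)) := by
  have hyμ : ∀ i, 1 ≤ i → i ≤ m - 1 →
      (2 * μ i + i) - (2 * μ (i + 1) + (i + 1 : ℕ)) = 2 * k i - 1 := fun i h1 h2 => by
    push_cast; linarith [hμdiff i h1 h2]
  have hyν : ∀ i, 1 ≤ i → i ≤ m - 1 → (2 * ν i + i) - (2 * ν (i + 1) + (i + 1 : ℕ)) =
      2 * ((if Odd i then 1 else 0 : ℤ) : ℝ) - 1 := fun i h1 h2 => by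
    push_cast; linarith [hνdiff i h1 h2]
  have hνsharp := sq_sub_eq_of_alternating hyν (Or.inl fun _ _ _ => rfl)
  have hbound : ∀ i ∈ Icc 1 m, ∀ j ∈ Icc 1 m, (2 * ν i + i - (2 * ν j + j)) ^ 2 ≤
      (2 * μ i + i - (2 * μ j + j)) ^ 2 := fun i hi j hj =>
    (hνsharp i hi j hj).symm ▸ oddInd_sub_sq_le_sq_sub hyμ hi hj
  have hcomp := card_mul_energy_sub_energy (Icc 1 m) (hμsum.trans hνsum.symm)
  have hcard : (0 : ℝ) < #(Icc 1 m) := by simp; omega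
  change energy _ ν ≤ energy _ μ ∧ (energy _ μ = energy _ ν ↔ _)
  refine ⟨by nlinarith [spread_le_spread hbound], ?_⟩
  rw [← sub_eq_zero, ← mul_eq_zero_iff_left (by positivity : (8 * #(Icc 1 m) : ℝ) ≠ 0), hcomp,
    sub_eq_zero, eq_comm, spread_eq_spread_iff hbound]
  exact ⟨fun h => alternating_of_sq_sub_eq hm hyμ fun i hi j hj =>
      (h i hi j hj).symm.trans (hνsharp i hi j hj),
    fun hk i hi j hj => (hνsharp i hi j hj).trans (sq_sub_eq_of_alternating hyμ hk i hi j hj).symm⟩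
end

section
/- In the compact setting described in the context, for every root α ∈ Φ₃ there exists X ∈ 𝔱_K with α(X) ≠ 0; in other words, the restriction α|_{𝔱_K} is nonzero. -/
open scoped TensorProduct

/-- The root space `𝔤_θ ⊆ 𝔤_ℂ = ℂ ⊗[ℝ] L` of an ℝ-linear map `θ : 𝔱 → ℂ`:
`{Z | [H, Z] = θ(H)·Z for all H ∈ 𝔱}`. -/
def rootSet {L : Type*} [LieRing L] [LieAlgebra ℝ L]
    (t : Submodule ℝ L) (θ : t →ₗ[ℝ] ℂ) : Set (ℂ ⊗[ℝ] L) :=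
  {Z | ∀ H : t, ⁅(1 : ℂ) ⊗ₜ[ℝ] (H : L), Z⁆ = θ H • Z}

/-- `θ ∈ Φ`: `θ` is a root, i.e. `θ ≠ 0` and `𝔤_θ ≠ 0`. -/
def IsRoot {L : Type*} [LieRing L] [LieAlgebra ℝ L]
    (t : Submodule ℝ L) (θ : t →ₗ[ℝ] ℂ) : Prop :=
  θ ≠ 0 ∧ ∃ Z ∈ rootSet t θ, Z ≠ 0

/-- `θ ∈ Φ₁`: `θ` is a root with `𝔤_θ ⊆ 𝔨_ℂ`. -/
def IsRoot1 {L : Type*} [LieRing L] [LieAlgebra ℝ L]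
    (t k : Submodule ℝ L) (θ : t →ₗ[ℝ] ℂ) : Prop :=
  IsRoot t θ ∧ rootSet t θ ⊆ (k.baseChange ℂ : Set (ℂ ⊗[ℝ] L))

/-- `θ ∈ Φ₂`: `θ` is a root with `𝔤_θ ⊆ 𝔭_ℂ`. -/
def IsRoot2 {L : Type*} [LieRing L] [LieAlgebra ℝ L]
    (t p : Submodule ℝ L) (θ : t →ₗ[ℝ] ℂ) : Prop :=
  IsRoot t θ ∧ rootSet t θ ⊆ (p.baseChange ℂ : Set (ℂ ⊗[ℝ] L))

/-- `θ ∈ Φ₃ = Φ \ (Φ₁ ∪ Φ₂)`. -/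
def IsRoot3 {L : Type*} [LieRing L] [LieAlgebra ℝ L]
    (t k p : Submodule ℝ L) (θ : t →ₗ[ℝ] ℂ) : Prop :=
  IsRoot t θ ∧ ¬IsRoot1 t k θ ∧ ¬IsRoot2 t p θ

/-! If `α` vanished on `𝔱_K`, then `α ∘ σ = -α`, so `σ` maps `𝔤_α` into `𝔤_{-α}`. For `Z ∈ 𝔤_α`,
`Z + σ Z` lies in `𝔨_ℂ` and `[H, Z + σ Z] = α(H) (Z - σ Z)`, which vanishes for `H ∈ 𝔱_K`. The real
and imaginary parts of `Z + σ Z` lie in `𝔨` and centralize `𝔱_K`, so by maximality they lie in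
`𝔱_K ⊆ 𝔱`; hence `Z + σ Z` centralizes all of `𝔱`. Choosing `H` with `α(H) ≠ 0` gives `σ Z = Z`,
so `𝔤_α ⊆ 𝔨_ℂ`, i.e. `α ∈ Φ₁`. -/

namespace ComplexTensor

variable {M N : Type*} [AddCommGroup M] [Module ℝ M] [AddCommGroup N] [Module ℝ N]

noncomputable def re : ℂ ⊗[ℝ] M →ₗ[ℝ] M :=
  TensorProduct.lift ((LinearMap.lsmul ℝ M).comp Complex.reLm)

noncomputable def im : ℂ ⊗[ℝ] M →ₗ[ℝ] M :=
  TensorProduct.lift ((LinearMap.lsmul ℝ M).comp Complex.imLm)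

@[simp] theorem re_tmul (c : ℂ) (x : M) : re (c ⊗ₜ[ℝ] x) = c.re • x := rfl

@[simp] theorem im_tmul (c : ℂ) (x : M) : im (c ⊗ₜ[ℝ] x) = c.im • x := rfl

theorem one_tmul_re_add_I_tmul_im (w : ℂ ⊗[ℝ] M) :
    (1 : ℂ) ⊗ₜ[ℝ] re w + Complex.I ⊗ₜ[ℝ] im w = w := by
  induction w using TensorProduct.induction_on with
  | zero => simp
  | tmul c x =>
    rw [re_tmul, im_tmul, ← TensorProduct.smul_tmul, ← TensorProduct.smul_tmul,
      ← TensorProduct.add_tmul]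
    congr 1
    apply Complex.ext <;> simp
  | add w₁ w₂ h₁ h₂ =>
    rw [map_add, map_add, TensorProduct.tmul_add, TensorProduct.tmul_add]
    conv_rhs => rw [← h₁, ← h₂]
    abel

theorem ext {w w' : ℂ ⊗[ℝ] M} (hre : re w = re w') (him : im w = im w') : w = w' := by
  rw [← one_tmul_re_add_I_tmul_im w, ← one_tmul_re_add_I_tmul_im w', hre, him]

theorem re_baseChange (f : M →ₗ[ℝ] N) (w : ℂ ⊗[ℝ] M) : re (f.baseChange ℂ w) = f (re w) := by
  induction w using TensorProduct.induction_on with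
  | zero => simp
  | tmul c x => simp
  | add w₁ w₂ h₁ h₂ => simp only [map_add, h₁, h₂]

theorem im_baseChange (f : M →ₗ[ℝ] N) (w : ℂ ⊗[ℝ] M) : im (f.baseChange ℂ w) = f (im w) := by
  induction w using TensorProduct.induction_on with
  | zero => simp
  | tmul c x => simp
  | add w₁ w₂ h₁ h₂ => simp only [map_add, h₁, h₂]

theorem re_mem_of_mem_baseChange {p : Submodule ℝ M} {w : ℂ ⊗[ℝ] M}
    (hw : w ∈ p.baseChange ℂ) : re w ∈ p := by
  obtain ⟨w, rfl⟩ := hw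
  rw [re_baseChange]
  exact (re w).2

theorem im_mem_of_mem_baseChange {p : Submodule ℝ M} {w : ℂ ⊗[ℝ] M}
    (hw : w ∈ p.baseChange ℂ) : im w ∈ p := by
  obtain ⟨w, rfl⟩ := hw
  rw [im_baseChange]
  exact (im w).2

end ComplexTensor

theorem LinearMap.baseChange_mem_baseChange {R A M N : Type*} [CommSemiring R] [Semiring A]
    [Algebra R A] [AddCommMonoid M] [Module R M] [AddCommMonoid N] [Module R N]
    {f : M →ₗ[R] N} {p : Submodule R N} (hf : ∀ x, f x ∈ p) (w : A ⊗[R] M) :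
    f.baseChange A w ∈ p.baseChange A :=
  ⟨(f.codRestrict p hf).baseChange A w, by
    rw [← LinearMap.comp_apply, ← LinearMap.baseChange_comp]; rfl⟩

theorem add_baseChange_mem_baseChange_of_involutive {R A M : Type*} [CommSemiring R]
    [Semiring A] [Algebra R A] [AddCommMonoid M] [Module R M] {τ : M →ₗ[R] M}
    (hτ : ∀ x, τ (τ x) = x) {k : Submodule R M} (hk : ∀ x, x ∈ k ↔ τ x = x)
    (w : A ⊗[R] M) : w + τ.baseChange A w ∈ k.baseChange A := by
  have hfix : ∀ x, ((LinearMap.id : M →ₗ[R] M) + τ) x ∈ k := fun x => by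
    rw [hk, LinearMap.add_apply, LinearMap.id_apply, map_add, hτ, add_comm]
  simpa [LinearMap.baseChange_add, LinearMap.baseChange_id] using
    LinearMap.baseChange_mem_baseChange (A := A) hfix w

theorem mem_of_forall_lie_eq_zero {R L : Type*} [CommRing R] [LieRing L] [LieAlgebra R L]
    {s k : Submodule R L} (hsk : s ≤ k) (hs : ∀ x ∈ s, ∀ y ∈ s, ⁅x, y⁆ = 0)
    (hmax : ∀ s' : Submodule R L, s' ≤ k → (∀ x ∈ s', ∀ y ∈ s', ⁅x, y⁆ = 0) → s ≤ s' → s' = s)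
    {w : L} (hwk : w ∈ k) (hw : ∀ x ∈ s, ⁅x, w⁆ = 0) : w ∈ s := by
  have hle : s ⊔ Submodule.span R {w} ≤ k :=
    sup_le hsk (Submodule.span_le.mpr (Set.singleton_subset_iff.mpr hwk))
  have habel : ∀ x ∈ s ⊔ Submodule.span R {w}, ∀ y ∈ s ⊔ Submodule.span R {w}, ⁅x, y⁆ = 0 := by
    intro x hx y hy
    obtain ⟨a, ha, _, hx', rfl⟩ := Submodule.mem_sup.mp hx
    obtain ⟨r, rfl⟩ := Submodule.mem_span_singleton.mp hx'
    obtain ⟨b, hb, _, hy', rfl⟩ := Submodule.mem_sup.mp hy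
    obtain ⟨r', rfl⟩ := Submodule.mem_span_singleton.mp hy'
    have hwb : ⁅w, b⁆ = 0 := by rw [← lie_skew, hw b hb, neg_zero]
    simp [hs a ha b hb, hw a ha, hwb]
  rw [← hmax _ hle habel le_sup_left]
  exact Submodule.mem_sup_right (Submodule.mem_span_singleton_self w)

section ComplexifiedLieAlgebra

open ComplexTensor

variable {L : Type*} [LieRing L] [LieAlgebra ℝ L]

theorem lie_one_tmul (H : L) (w : ℂ ⊗[ℝ] L) :
    ⁅(1 : ℂ) ⊗ₜ[ℝ] H, w⁆ = (LieAlgebra.ad ℝ L H).baseChange ℂ w :=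
  LinearMap.congr_fun (LieModule.toEnd_baseChange ℝ ℂ L L H) w

theorem ComplexTensor.re_lie_one_tmul (H : L) (w : ℂ ⊗[ℝ] L) :
    re ⁅(1 : ℂ) ⊗ₜ[ℝ] H, w⁆ = ⁅H, re w⁆ := by
  rw [lie_one_tmul, re_baseChange, LieAlgebra.ad_apply]

theorem ComplexTensor.im_lie_one_tmul (H : L) (w : ℂ ⊗[ℝ] L) :
    im ⁅(1 : ℂ) ⊗ₜ[ℝ] H, w⁆ = ⁅H, im w⁆ := by
  rw [lie_one_tmul, im_baseChange, LieAlgebra.ad_apply]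

theorem LieHom.baseChange_lie (σ : L →ₗ⁅ℝ⁆ L) (x w : ℂ ⊗[ℝ] L) :
    σ.toLinearMap.baseChange ℂ ⁅x, w⁆ =
      ⁅σ.toLinearMap.baseChange ℂ x, σ.toLinearMap.baseChange ℂ w⁆ :=
  (LieAlgebra.ExtendScalars.map (AlgHom.id ℝ ℂ) σ).map_lie x w

variable {t k : Submodule ℝ L}

theorem lie_one_tmul_eq_zero_of_mem_baseChange (htab : ∀ x ∈ t, ∀ y ∈ t, ⁅x, y⁆ = 0)
    (htKmax : ∀ s : Submodule ℝ L, s ≤ k → (∀ x ∈ s, ∀ y ∈ s, ⁅x, y⁆ = 0) → t ⊓ k ≤ s →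
      s = t ⊓ k)
    {w : ℂ ⊗[ℝ] L} (hwk : w ∈ k.baseChange ℂ) (hw : ∀ x ∈ t ⊓ k, ⁅(1 : ℂ) ⊗ₜ[ℝ] x, w⁆ = 0)
    {H : L} (hH : H ∈ t) : ⁅(1 : ℂ) ⊗ₜ[ℝ] H, w⁆ = 0 := by
  have hcentral : ∀ y ∈ k, (∀ x ∈ t ⊓ k, ⁅x, y⁆ = 0) → ⁅H, y⁆ = 0 := fun y hyk hy =>
    htab H hH y (mem_of_forall_lie_eq_zero inf_le_right
      (fun a ha b hb => htab a ha.1 b hb.1) htKmax hyk hy).1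
  refine ComplexTensor.ext ?_ ?_
  · rw [re_lie_one_tmul, map_zero]
    refine hcentral _ (re_mem_of_mem_baseChange hwk) fun x hx => ?_
    rw [← re_lie_one_tmul, hw x hx, map_zero]
  · rw [im_lie_one_tmul, map_zero]
    refine hcentral _ (im_mem_of_mem_baseChange hwk) fun x hx => ?_
    rw [← im_lie_one_tmul, hw x hx, map_zero]

variable {σ : L →ₗ⁅ℝ⁆ L} (hσinv : ∀ x, σ (σ x) = x) (hσt : ∀ x ∈ t, σ x ∈ t)
include hσinv hσt

theorem baseChange_mem_rootSet {α : t →ₗ[ℝ] ℂ} {Z : ℂ ⊗[ℝ] L} (hZ : Z ∈ rootSet t α) :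
    σ.toLinearMap.baseChange ℂ Z ∈ rootSet t (α ∘ₗ σ.toLinearMap.restrict hσt) := by
  intro H
  have h := congrArg (σ.toLinearMap.baseChange ℂ) (hZ (σ.toLinearMap.restrict hσt H))
  rwa [LieHom.baseChange_lie, map_smul, LinearMap.baseChange_tmul, LinearMap.coe_restrict_apply,
    LieHom.coe_toLinearMap, hσinv] at h

theorem comp_restrict_eq_neg (hk : ∀ x, x ∈ k ↔ σ x = x) {α : t →ₗ[ℝ] ℂ}
    (hα : ∀ X : t, (X : L) ∈ k → α X = 0) : α ∘ₗ σ.toLinearMap.restrict hσt = -α := by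
  ext H
  have hfix : ((H + σ.toLinearMap.restrict hσt H : t) : L) ∈ k := by
    rw [hk]
    simp [hσinv, add_comm]
  simpa [eq_neg_iff_add_eq_zero, add_comm] using hα _ hfix

theorem rootSet_subset_baseChange (hk : ∀ x, x ∈ k ↔ σ x = x)
    (htab : ∀ x ∈ t, ∀ y ∈ t, ⁅x, y⁆ = 0)
    (htKmax : ∀ s : Submodule ℝ L, s ≤ k → (∀ x ∈ s, ∀ y ∈ s, ⁅x, y⁆ = 0) → t ⊓ k ≤ s →
      s = t ⊓ k)
    {α : t →ₗ[ℝ] ℂ} (hα₀ : α ≠ 0) (hα : ∀ X : t, (X : L) ∈ k → α X = 0) :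
    rootSet t α ⊆ k.baseChange ℂ := by
  intro Z hZ
  set σℂ := σ.toLinearMap.baseChange ℂ
  have hσZ : σℂ Z ∈ rootSet t (-α) :=
    comp_restrict_eq_neg hσinv hσt hk hα ▸ baseChange_mem_rootSet hσinv hσt hZ
  have hZk : Z + σℂ Z ∈ k.baseChange ℂ := add_baseChange_mem_baseChange_of_involutive hσinv hk Z
  have hbracket : ∀ H : t, ⁅(1 : ℂ) ⊗ₜ[ℝ] (H : L), Z + σℂ Z⁆ = α H • (Z - σℂ Z) := by
    intro H
    rw [lie_one_tmul, map_add, ← lie_one_tmul, ← lie_one_tmul, hZ H, hσZ H, LinearMap.neg_apply]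
    module
  have hcentral : ∀ H : t, ⁅(1 : ℂ) ⊗ₜ[ℝ] (H : L), Z + σℂ Z⁆ = 0 := fun H =>
    lie_one_tmul_eq_zero_of_mem_baseChange htab htKmax hZk
      (fun x hx => by rw [hbracket ⟨x, hx.1⟩, hα _ hx.2, zero_smul]) H.2
  obtain ⟨H₀, hH₀⟩ : ∃ H : t, α H ≠ 0 := DFunLike.ne_iff.mp hα₀
  have hfix : σℂ Z = Z := by
    have h := hbracket H₀
    rw [hcentral H₀, eq_comm, smul_eq_zero, sub_eq_zero] at h
    exact (h.resolve_left hH₀).symm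
  have hZ2 : Z = (2⁻¹ : ℂ) • (Z + σℂ Z) := by
    rw [hfix]
    module
  rw [hZ2]
  exact Submodule.smul_mem _ _ hZk

end ComplexifiedLieAlgebra

theorem stmt_11_general (L : Type*) [LieRing L] [LieAlgebra ℝ L]
    (σ : L →ₗ⁅ℝ⁆ L) (hσinv : ∀ x, σ (σ x) = x)
    (k p : Submodule ℝ L)
    (hk : ∀ x, x ∈ k ↔ σ x = x)
    (t : Submodule ℝ L)
    (htab : ∀ x ∈ t, ∀ y ∈ t, ⁅x, y⁆ = 0)
    (hσt : ∀ x ∈ t, σ x ∈ t)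
    (tK : Submodule ℝ L) (htK : tK = t ⊓ k)
    (htKmax : ∀ s : Submodule ℝ L, s ≤ k → (∀ x ∈ s, ∀ y ∈ s, ⁅x, y⁆ = 0) → tK ≤ s → s = tK) :
    ∀ α : t →ₗ[ℝ] ℂ, IsRoot3 t k p α → ∃ X : t, (X : L) ∈ tK ∧ α X ≠ 0 := by
  intro α hα
  subst htK
  by_contra! hvanish
  exact hα.2.1 ⟨hα.1, rootSet_subset_baseChange hσinv hσt hk htab htKmax hα.1.1
    fun X hX => hvanish X ⟨X.2, hX⟩⟩

/-- In the compact setting (`𝔤` a finite-dimensional real Lie algebra with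
negative definite Killing form, `σ` an involutive automorphism with fixed subalgebra `𝔨` and
`(−1)`-eigenspace `𝔭`, `𝔱` a `σ`-stable maximal abelian subalgebra with `𝔱_K = 𝔱 ∩ 𝔨` maximal
abelian in `𝔨` and `𝔱₀ = 𝔱 ∩ 𝔭`), for every root `α ∈ Φ₃` there exists `X ∈ 𝔱_K` with
`α(X) ≠ 0`. -/
theorem stmt_11 (L : Type*) [LieRing L] [LieAlgebra ℝ L] [Module.Finite ℝ L]
    (hkill : ∀ x : L, x ≠ 0 → killingForm ℝ L x x < 0)
    (σ : L →ₗ⁅ℝ⁆ L) (hσinv : ∀ x, σ (σ x) = x)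
    (k p : Submodule ℝ L)
    (hk : ∀ x, x ∈ k ↔ σ x = x) (hp : ∀ x, x ∈ p ↔ σ x = -x)
    (t : Submodule ℝ L)
    (htab : ∀ x ∈ t, ∀ y ∈ t, ⁅x, y⁆ = 0)
    (htmax : ∀ s : Submodule ℝ L, (∀ x ∈ s, ∀ y ∈ s, ⁅x, y⁆ = 0) → t ≤ s → s = t)
    (hσt : ∀ x ∈ t, σ x ∈ t)
    (tK t0 : Submodule ℝ L) (htK : tK = t ⊓ k) (ht0 : t0 = t ⊓ p)
    (htKmax : ∀ s : Submodule ℝ L, s ≤ k → (∀ x ∈ s, ∀ y ∈ s, ⁅x, y⁆ = 0) → tK ≤ s → s = tK) :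
    ∀ α : t →ₗ[ℝ] ℂ, IsRoot3 t k p α → ∃ X : t, (X : L) ∈ tK ∧ α X ≠ 0 :=
  stmt_11_general L σ hσinv k p hk t htab hσt tK htK htKmax
end

section
/- Let m ≥ 2 be even. Define μ, δ ∈ ℝ^{2m} by: μ_{2i−1} = (−1)^{i+1}/2 and μ_{2i} = m + 1 − i for i = 1, …, m; δ_{2i−1} = 0 and δ_{2i} = 2(m − i) + 1 for i = 1, …, m. Then, with ⟨·,·⟩ the standard inner product on ℝ^{2m}, (1/(8m))·⟨μ, μ + 2δ⟩ + (2m² + m − 1)/16 = (1/12)(m+1)(4m−1) + 1/32. -/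
/-! Grouping the coordinates in pairs `(2i-1, 2i)`, each odd coordinate contributes
`μ_{2i-1}² = 1/4` (whatever the sign) and each even one `(m+1-i)(5(m+1-i) - 2)`, a quadratic
polynomial in `i`. The formulas for `∑ i` and `∑ i²` then turn the claim into a polynomial
identity in `m`. -/

open Finset

theorem Finset.sum_Icc_one_two_mul_eq_sum_pairs {M : Type*} [AddCommMonoid M] (g : ℕ → M)
    (m : ℕ) :
    ∑ j ∈ Icc 1 (2 * m), g j = ∑ i ∈ Icc 1 m, (g (2 * i - 1) + g (2 * i)) := by
  induction m with
  | zero => simp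
  | succ n ih =>
    rw [show 2 * (n + 1) = 2 * n + 1 + 1 by ring, sum_Icc_succ_top (by omega),
      sum_Icc_succ_top (by omega), sum_Icc_succ_top (by omega), ih,
      show 2 * (n + 1) - 1 = 2 * n + 1 by omega, show 2 * (n + 1) = 2 * n + 1 + 1 by omega,
      add_assoc]

section GaussSums

variable {K : Type*} [Field K] [CharZero K]

theorem Finset.sum_Icc_one_natCast (n : ℕ) :
    ∑ i ∈ Icc 1 n, (i : K) = n * (n + 1) / 2 := by
  induction n with
  | zero => simp
  | succ k ih =>
    rw [sum_Icc_succ_top (by omega), ih]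
    push_cast
    ring

theorem Finset.sum_Icc_one_natCast_sq (n : ℕ) :
    ∑ i ∈ Icc 1 n, (i : K) ^ 2 = n * (n + 1) * (2 * n + 1) / 6 := by
  induction n with
  | zero => simp
  | succ k ih =>
    rw [sum_Icc_succ_top (by omega), ih]
    push_cast
    ring

end GaussSums

theorem stmt_16_general (m : ℕ) (hm : 2 ≤ m)
    (μ δ : ℕ → ℝ)
    (hμo : ∀ i, 1 ≤ i → i ≤ m → μ (2 * i - 1) = (-1 : ℝ) ^ (i + 1) / 2)
    (hμe : ∀ i, 1 ≤ i → i ≤ m → μ (2 * i) = (m : ℝ) + 1 - (i : ℝ))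
    (hδo : ∀ i, 1 ≤ i → i ≤ m → δ (2 * i - 1) = 0)
    (hδe : ∀ i, 1 ≤ i → i ≤ m → δ (2 * i) = 2 * ((m : ℝ) - (i : ℝ)) + 1) :
    (1 / (8 * (m : ℝ))) * (∑ j ∈ Finset.Icc 1 (2 * m), μ j * (μ j + 2 * δ j)) +
        (2 * (m : ℝ) ^ 2 + (m : ℝ) - 1) / 16 =
      (1 / 12) * ((m : ℝ) + 1) * (4 * (m : ℝ) - 1) + 1 / 32 := by
  have hpair : ∀ i ∈ Icc 1 m,
      μ (2 * i - 1) * (μ (2 * i - 1) + 2 * δ (2 * i - 1)) +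
          μ (2 * i) * (μ (2 * i) + 2 * δ (2 * i))
        = (1 / 4 + (m + 1) * (5 * m + 3) : ℝ) - (10 * m + 8) * i + 5 * (i : ℝ) ^ 2 := by
    intro i hi
    obtain ⟨hi₁, hi₂⟩ := mem_Icc.mp hi
    have hsq : ((-1 : ℝ) ^ (i + 1)) ^ 2 = 1 := by rw [pow_right_comm, neg_one_sq, one_pow]
    rw [hμo i hi₁ hi₂, hμe i hi₁ hi₂, hδo i hi₁ hi₂, hδe i hi₁ hi₂]
    linear_combination (1 / 4 : ℝ) * hsq
  have hsum : ∑ j ∈ Icc 1 (2 * m), μ j * (μ j + 2 * δ j)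
      = m * (1 / 4 + (m + 1) * (5 * m + 3)) - (10 * m + 8) * (m * (m + 1) / 2)
          + 5 * (m * (m + 1) * (2 * m + 1) / 6) := by
    rw [sum_Icc_one_two_mul_eq_sum_pairs, sum_congr rfl hpair, sum_add_distrib,
      sum_sub_distrib, ← mul_sum, ← mul_sum, sum_const, sum_Icc_one_natCast,
      sum_Icc_one_natCast_sq, Nat.card_Icc, Nat.add_sub_cancel, nsmul_eq_mul]
  have hm0 : (m : ℝ) ≠ 0 := by positivity
  rw [hsum]
  field_simp
  ring

/-- Let `m ≥ 2` be even and define `μ, δ ∈ ℝ^{2m}` (coordinates indexed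
`1, …, 2m`) by `μ_{2i−1} = (−1)^{i+1}/2`, `μ_{2i} = m + 1 − i`, `δ_{2i−1} = 0`,
`δ_{2i} = 2(m − i) + 1` for `i = 1, …, m`. Then, with `⟨·,·⟩` the standard inner product,
`(1/(8m))·⟨μ, μ + 2δ⟩ + (2m² + m − 1)/16 = (1/12)(m+1)(4m−1) + 1/32`. -/
theorem stmt_16 (m : ℕ) (hm : 2 ≤ m) (hmeven : Even m)
    (μ δ : ℕ → ℝ)
    (hμo : ∀ i, 1 ≤ i → i ≤ m → μ (2 * i - 1) = (-1 : ℝ) ^ (i + 1) / 2)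
    (hμe : ∀ i, 1 ≤ i → i ≤ m → μ (2 * i) = (m : ℝ) + 1 - (i : ℝ))
    (hδo : ∀ i, 1 ≤ i → i ≤ m → δ (2 * i - 1) = 0)
    (hδe : ∀ i, 1 ≤ i → i ≤ m → δ (2 * i) = 2 * ((m : ℝ) - (i : ℝ)) + 1) :
    (1 / (8 * (m : ℝ))) * (∑ j ∈ Finset.Icc 1 (2 * m), μ j * (μ j + 2 * δ j)) +
        (2 * (m : ℝ) ^ 2 + (m : ℝ) - 1) / 16 =
      (1 / 12) * ((m : ℝ) + 1) * (4 * (m : ℝ) - 1) + 1 / 32 :=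
  stmt_16_general m hm μ δ hμo hμe hδo hδe
end

section
/- Let m ≥ 1 be odd. Define μ, δ ∈ ℝ^{2m} by: μ_{2i−1} = (−1)^{i+1}/2 − 1/(2m) and μ_{2i} = m + 1 − i for i = 1, …, m; δ_{2i−1} = 0 and δ_{2i} = 2(m − i) + 1 for i = 1, …, m. Then, with ⟨·,·⟩ the standard inner product on ℝ^{2m}, (1/(8m))·⟨μ, μ + 2δ⟩ + (2m² + m − 1)/16 = (1/12)(m+1)(4m−1) + (1/32)(1 − 1/m²). -/
/-!
Splitting `⟨μ, μ + 2δ⟩` into the contributions of the coordinate pairs `(2i-1, 2i)` and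
substituting `k = m + 1 - i` in the even coordinates, the even pair contributes `k (5k - 2)` and
the odd one `1/4 + 1/(4m²) - (-1)^(i+1)/(2m)`. Since `m` is odd the signs sum to `1`, so
`⟨μ, μ + 2δ⟩ = m/4 - 1/(4m) + m(m+1)(10m-1)/6`, and what remains is an identity of rational
functions of `m`.
-/

open Finset

theorem Finset.sum_Icc_one_two_mul {M : Type*} [AddCommMonoid M] (f : ℕ → M) (m : ℕ) :
    ∑ j ∈ Icc 1 (2 * m), f j = ∑ i ∈ Icc 1 m, (f (2 * i - 1) + f (2 * i)) := by
  induction m with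
  | zero => simp
  | succ n ih =>
    rw [show 2 * (n + 1) = 2 * n + 1 + 1 by ring, sum_Icc_succ_top (by omega),
      sum_Icc_succ_top (by omega), sum_Icc_succ_top (by omega), ih, add_assoc,
      show 2 * (n + 1) - 1 = 2 * n + 1 by omega, show 2 * (n + 1) = 2 * n + 1 + 1 by ring]

theorem Finset.sum_Icc_one_reflect {R M : Type*} [Ring R] [AddCommMonoid M] (g : R → M) (m : ℕ) :
    ∑ i ∈ Icc 1 m, g ((m : R) + 1 - i) = ∑ i ∈ Icc 1 m, g i := by
  have h := sum_Ico_reflect (fun j : ℕ => g j) 1 (m := m + 1) (n := m + 1) (by omega)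
  simp only [Nat.add_sub_cancel, Nat.add_sub_cancel_left, Ico_add_one_right_eq_Icc] at h
  rw [← h]
  refine sum_congr rfl fun i hi => ?_
  rw [Nat.cast_sub ((mem_Icc.1 hi).2.trans (Nat.le_succ m)), Nat.cast_succ]

theorem Finset.sum_Icc_neg_one_pow_succ_of_odd {R : Type*} [Ring R] {m : ℕ} (hm : Odd m) :
    ∑ i ∈ Icc 1 m, (-1 : R) ^ (i + 1) = 1 := by
  rw [← Ico_add_one_right_eq_Icc, sum_Ico_eq_sum_range, Nat.add_sub_cancel]
  simp [pow_add, neg_one_geom_sum, Nat.not_even_iff_odd.2 hm]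

theorem Finset.sum_Icc_mul_five_mul_sub_two {K : Type*} [Field K] [CharZero K] (m : ℕ) :
    ∑ k ∈ Icc 1 m, (k : K) * (5 * k - 2) = m * (m + 1) * (10 * m - 1) / 6 := by
  induction m with
  | zero => simp
  | succ n ih => rw [sum_Icc_succ_top (by omega), ih]; push_cast; ring

theorem stmt_17_general (m : ℕ) (hmodd : Odd m)
    (μ δ : ℕ → ℝ)
    (hμo : ∀ i, 1 ≤ i → i ≤ m → μ (2 * i - 1) = (-1 : ℝ) ^ (i + 1) / 2 - 1 / (2 * (m : ℝ)))
    (hμe : ∀ i, 1 ≤ i → i ≤ m → μ (2 * i) = (m : ℝ) + 1 - (i : ℝ))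
    (hδo : ∀ i, 1 ≤ i → i ≤ m → δ (2 * i - 1) = 0)
    (hδe : ∀ i, 1 ≤ i → i ≤ m → δ (2 * i) = 2 * ((m : ℝ) - (i : ℝ)) + 1) :
    (1 / (8 * (m : ℝ))) * (∑ j ∈ Finset.Icc 1 (2 * m), μ j * (μ j + 2 * δ j)) +
        (2 * (m : ℝ) ^ 2 + (m : ℝ) - 1) / 16 =
      (1 / 12) * ((m : ℝ) + 1) * (4 * (m : ℝ) - 1) +
        (1 / 32) * (1 - 1 / (m : ℝ) ^ 2) := by
  have hm : (m : ℝ) ≠ 0 := by exact_mod_cast hmodd.pos.ne'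
  have hpair : ∀ i ∈ Icc 1 m,
      μ (2 * i - 1) * (μ (2 * i - 1) + 2 * δ (2 * i - 1)) + μ (2 * i) * (μ (2 * i) + 2 * δ (2 * i)) =
        (1 / 4 + 1 / (4 * (m : ℝ) ^ 2)) - (-1 : ℝ) ^ (i + 1) / (2 * m) +
          ((m : ℝ) + 1 - i) * (5 * ((m : ℝ) + 1 - i) - 2) := by
    intro i hi
    obtain ⟨h1, h2⟩ := mem_Icc.1 hi
    have hsign : ((-1 : ℝ) ^ (i + 1)) ^ 2 = 1 := by rw [← pow_mul, pow_mul', neg_one_sq, one_pow]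
    rw [hμo i h1 h2, hμe i h1 h2, hδo i h1 h2, hδe i h1 h2]
    field_simp
    linear_combination (4 * (m : ℝ) ^ 2) * hsign
  rw [sum_Icc_one_two_mul, sum_congr rfl hpair, sum_add_distrib, sum_sub_distrib, sum_const,
    Nat.card_Icc, ← sum_div, sum_Icc_neg_one_pow_succ_of_odd hmodd,
    sum_Icc_one_reflect (fun x : ℝ => x * (5 * x - 2)), sum_Icc_mul_five_mul_sub_two,
    Nat.add_sub_cancel, nsmul_eq_mul]
  field_simp
  ring

/-- Let `m ≥ 1` be odd and define `μ, δ ∈ ℝ^{2m}` (coordinates indexed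
`1, …, 2m`) by `μ_{2i−1} = (−1)^{i+1}/2 − 1/(2m)`, `μ_{2i} = m + 1 − i`, `δ_{2i−1} = 0`,
`δ_{2i} = 2(m − i) + 1` for `i = 1, …, m`. Then, with `⟨·,·⟩` the standard inner product,
`(1/(8m))·⟨μ, μ + 2δ⟩ + (2m² + m − 1)/16 = (1/12)(m+1)(4m−1) + (1/32)(1 − 1/m²)`. -/
theorem stmt_17 (m : ℕ) (hm : 1 ≤ m) (hmodd : Odd m)
    (μ δ : ℕ → ℝ)
    (hμo : ∀ i, 1 ≤ i → i ≤ m → μ (2 * i - 1) = (-1 : ℝ) ^ (i + 1) / 2 - 1 / (2 * (m : ℝ)))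
    (hμe : ∀ i, 1 ≤ i → i ≤ m → μ (2 * i) = (m : ℝ) + 1 - (i : ℝ))
    (hδo : ∀ i, 1 ≤ i → i ≤ m → δ (2 * i - 1) = 0)
    (hδe : ∀ i, 1 ≤ i → i ≤ m → δ (2 * i) = 2 * ((m : ℝ) - (i : ℝ)) + 1) :
    (1 / (8 * (m : ℝ))) * (∑ j ∈ Finset.Icc 1 (2 * m), μ j * (μ j + 2 * δ j)) +
        (2 * (m : ℝ) ^ 2 + (m : ℝ) - 1) / 16 =
      (1 / 12) * ((m : ℝ) + 1) * (4 * (m : ℝ) - 1) +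
        (1 / 32) * (1 - 1 / (m : ℝ) ^ 2) :=
  stmt_17_general m hmodd μ δ hμo hμe hδo hδe
end

section
/- Let m = 2p ≥ 2 be even. Define μ, δ ∈ ℝ^{2m} by: μ_{2i−1} = p + 3/4 − i and μ_{2i} = p − 1/4 − i for i = 1, …, p; μ_{m+2i−1} = −(p + 1/4 − i) and μ_{m+2i} = −(p + 1/4 − i) for i = 1, …, p; δ_k = m − k + 1/2 and δ_{m+k} = −(m − k + 1/2) for k = 1, …, m. Then, with ⟨·,·⟩ the standard inner product on ℝ^{2m}, (1/(4m))·⟨μ, μ + 2δ⟩ + (2m² − m − 1)/16 = (1/12)(m−1)(4m+1) + 1/32. -/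
/-! Pairing the coordinates `2i − 1, 2i` and `m + 2i − 1, m + 2i` turns `⟨μ, μ + 2δ⟩` into
`∑_{i=1}^{p}` of a quadratic polynomial in `i`, namely `20 i² − (40p + 14) i + 20p² + 14p + 15/4`.
Summing it gives `p (80p² − 36p + 1) / 12`, and the identity becomes one between rational
functions of `p`, checked after clearing the denominator `4m = 8p ≠ 0`. -/

open Finset

namespace Finset

variable {M : Type*} [AddCommMonoid M]

theorem sum_Icc_one_add (g : ℕ → M) (a b : ℕ) :
    ∑ i ∈ Icc 1 (a + b), g i = ∑ i ∈ Icc 1 a, g i + ∑ i ∈ Icc 1 b, g (a + i) := by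
  induction b with
  | zero => simp
  | succ b ih =>
    rw [← add_assoc, sum_Icc_succ_top (by omega), ih, sum_Icc_succ_top (by omega), add_assoc,
      add_assoc]

theorem sum_Icc_one_two_mul_s19 (g : ℕ → M) (n : ℕ) :
    ∑ j ∈ Icc 1 (2 * n), g j = ∑ i ∈ Icc 1 n, (g (2 * i - 1) + g (2 * i)) := by
  induction n with
  | zero => simp
  | succ n ih =>
    have hodd : 2 * (n + 1) - 1 = 2 * n + 1 := by omega
    rw [mul_add_one, sum_Icc_succ_top (by omega), sum_Icc_succ_top (by omega), ih,
      sum_Icc_succ_top (by omega), hodd, mul_add_one, add_assoc]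

end Finset

theorem sum_Icc_one_quadratic (A B C : ℝ) (n : ℕ) :
    ∑ i ∈ Icc 1 n, (A * (i : ℝ) ^ 2 + B * i + C) =
      A * (n * (n + 1) * (2 * n + 1) / 6) + B * (n * (n + 1) / 2) + C * n := by
  induction n with
  | zero => simp
  | succ n ih =>
    rw [sum_Icc_succ_top (by omega), ih]
    push_cast
    ring

/-- Let `m = 2p ≥ 2` be even and define `μ, δ ∈ ℝ^{2m}` (coordinates indexed
`1, …, 2m`) by `μ_{2i−1} = p + 3/4 − i`, `μ_{2i} = p − 1/4 − i`, `μ_{m+2i−1} = −(p + 1/4 − i)`,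
`μ_{m+2i} = −(p + 1/4 − i)` for `i = 1, …, p`, and `δ_k = m − k + 1/2`,
`δ_{m+k} = −(m − k + 1/2)` for `k = 1, …, m`. Then, with `⟨·,·⟩` the standard inner product,
`(1/(4m))·⟨μ, μ + 2δ⟩ + (2m² − m − 1)/16 = (1/12)(m−1)(4m+1) + 1/32`. -/
theorem stmt_19 (p m : ℕ) (hp : 1 ≤ p) (hm : m = 2 * p)
    (μ δ : ℕ → ℝ)
    (h1 : ∀ i, 1 ≤ i → i ≤ p → μ (2 * i - 1) = (p : ℝ) + 3 / 4 - (i : ℝ))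
    (h2 : ∀ i, 1 ≤ i → i ≤ p → μ (2 * i) = (p : ℝ) - 1 / 4 - (i : ℝ))
    (h3 : ∀ i, 1 ≤ i → i ≤ p → μ (m + 2 * i - 1) = -((p : ℝ) + 1 / 4 - (i : ℝ)))
    (h4 : ∀ i, 1 ≤ i → i ≤ p → μ (m + 2 * i) = -((p : ℝ) + 1 / 4 - (i : ℝ)))
    (h5 : ∀ j, 1 ≤ j → j ≤ m → δ j = (m : ℝ) - (j : ℝ) + 1 / 2)
    (h6 : ∀ j, 1 ≤ j → j ≤ m → δ (m + j) = -((m : ℝ) - (j : ℝ) + 1 / 2)) :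
    (1 / (4 * (m : ℝ))) * (∑ j ∈ Finset.Icc 1 (2 * m), μ j * (μ j + 2 * δ j)) +
        (2 * (m : ℝ) ^ 2 - (m : ℝ) - 1) / 16 =
      (1 / 12) * ((m : ℝ) - 1) * (4 * (m : ℝ) + 1) + 1 / 32 := by
  subst hm
  set g : ℕ → ℝ := fun j => μ j * (μ j + 2 * δ j)
  have hblock : ∀ i ∈ Icc 1 p,
      g (2 * i - 1) + g (2 * i) + (g (2 * p + (2 * i - 1)) + g (2 * p + 2 * i)) =
        20 * (i : ℝ) ^ 2 + -(40 * p + 14) * i + (20 * p ^ 2 + 14 * p + 15 / 4) := by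
    intro i hi
    obtain ⟨hi1, hip⟩ := mem_Icc.mp hi
    have hμ₃ : μ (2 * p + (2 * i - 1)) = -(p + 1 / 4 - i) := by
      rw [← Nat.add_sub_assoc (by omega)]
      exact h3 i hi1 hip
    simp only [g]
    rw [h1 i hi1 hip, h2 i hi1 hip, hμ₃, h4 i hi1 hip, h5 _ (by omega) (by omega),
      h5 _ (by omega) (by omega), h6 _ (by omega) (by omega), h6 _ (by omega) (by omega),
      Nat.cast_sub (by omega)]
    push_cast
    ring
  rw [two_mul (2 * p), sum_Icc_one_add, sum_Icc_one_two_mul_s19, sum_Icc_one_two_mul_s19 (g <| 2 * p + ·),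
    ← sum_add_distrib, sum_congr rfl hblock, sum_Icc_one_quadratic]
  have hp0 : (p : ℝ) ≠ 0 := by positivity
  push_cast
  field_simp
  ring
end
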